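/- arXiv:2105.01326 — 4 statements merged into one kernel-verified Lean document; each statement's English description precedes it below -/
import Mathlib

section
/- Let (A,m,Δ,S) be a Hopf algebra with antipode S, and define Φ : A⊗A → A⊗A by Φ(a⊗b) = Σ b⁽¹⁾ ⊗ S(b⁽²⁾)a. Then Φ satisfies the ℓEAS braid equation (Id⊗Φ)∘(Φ⊗Id)∘(Id⊗Φ) = (Φ⊗Id)∘(Id⊗τ)∘(Φ⊗Id). -/
open TensorProduct

/-- The flip of tensor factors. -/
noncomputable def tauMap (K A : Type*) [CommSemiring K] [AddCommMonoid A] [Module K A] :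
    A ⊗[K] A →ₗ[K] A ⊗[K] A :=
  (TensorProduct.comm K A A).toLinearMap

/-- `f ⊗ Id` viewed on `(A ⊗ A) ⊗ A`. -/
noncomputable def leftT (K A : Type*) [CommSemiring K] [AddCommMonoid A] [Module K A]
    (f : A ⊗[K] A →ₗ[K] A ⊗[K] A) : (A ⊗[K] A) ⊗[K] A →ₗ[K] (A ⊗[K] A) ⊗[K] A :=
  TensorProduct.map f LinearMap.id

/-- `Id ⊗ f` viewed on `(A ⊗ A) ⊗ A` via the associator. -/
noncomputable def rightT (K A : Type*) [CommSemiring K] [AddCommMonoid A] [Module K A]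
    (f : A ⊗[K] A →ₗ[K] A ⊗[K] A) : (A ⊗[K] A) ⊗[K] A →ₗ[K] (A ⊗[K] A) ⊗[K] A :=
  (TensorProduct.assoc K A A A).symm.toLinearMap ∘ₗ
    TensorProduct.map LinearMap.id f ∘ₗ (TensorProduct.assoc K A A A).toLinearMap

/-- The ℓEAS braid equation for a linear map `Φ : A ⊗ A → A ⊗ A`. -/
def IsLEAS (K A : Type*) [CommSemiring K] [AddCommMonoid A] [Module K A]
    (Φ : A ⊗[K] A →ₗ[K] A ⊗[K] A) : Prop :=
  rightT K A Φ ∘ₗ leftT K A Φ ∘ₗ rightT K A Φ =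
    leftT K A Φ ∘ₗ rightT K A (tauMap K A) ∘ₗ leftT K A Φ

/-- The ℓEAS map `Φ(a ⊗ b) = Σ b⁽¹⁾ ⊗ S(b⁽²⁾)a` of a Hopf algebra. -/
noncomputable def PhiHopf (K A : Type*) [Field K] [Ring A] [HopfAlgebra K A] :
    A ⊗[K] A →ₗ[K] A ⊗[K] A :=
  TensorProduct.map LinearMap.id
      (LinearMap.mul' K A ∘ₗ TensorProduct.map (HopfAlgebra.antipode (R := K)) LinearMap.id) ∘ₗ
    (TensorProduct.assoc K A A A).toLinearMap ∘ₗ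
    TensorProduct.map (Coalgebra.comul (R := K)) LinearMap.id ∘ₗ
    tauMap K A

/-!
The map `Θ(a ⊗ b) = Σ a⁽²⁾b ⊗ a⁽¹⁾` makes sense in any bialgebra and satisfies the ℓEAS equation
by coassociativity and multiplicativity of `Δ` alone: both sides send `a ⊗ b ⊗ c` to
`Σ ((a⁽³⁾ ⊗ a⁽²⁾) · Θ(b ⊗ c)) ⊗ a⁽¹⁾`. In a Hopf algebra the antipode axioms make `Θ` the inverse
of `Φ`, and inverting both sides of the ℓEAS equation for `Θ` gives it for `Φ`, as `τ` is an
involution.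
-/

open TensorProduct Coalgebra

section Inverse

variable {K A : Type*} [CommSemiring K] [AddCommMonoid A] [Module K A]

lemma leftT_comp (f g : A ⊗[K] A →ₗ[K] A ⊗[K] A) :
    leftT K A (f ∘ₗ g) = leftT K A f ∘ₗ leftT K A g := by
  ext
  simp [leftT]

lemma rightT_comp (f g : A ⊗[K] A →ₗ[K] A ⊗[K] A) :
    rightT K A (f ∘ₗ g) = rightT K A f ∘ₗ rightT K A g := by
  ext
  simp [rightT]

lemma leftT_id : leftT K A LinearMap.id = LinearMap.id :=
  TensorProduct.map_id

lemma rightT_id : rightT K A LinearMap.id = LinearMap.id := by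
  ext
  simp [rightT]

lemma tauMap_comp_tauMap : tauMap K A ∘ₗ tauMap K A = LinearMap.id := by
  ext
  simp [tauMap]

theorem IsLEAS.of_inverse {f g : A ⊗[K] A →ₗ[K] A ⊗[K] A} (hfg : f ∘ₗ g = LinearMap.id)
    (hgf : g ∘ₗ f = LinearMap.id) (hg : IsLEAS K A g) : IsLEAS K A f := by
  have cancel {u v : A ⊗[K] A →ₗ[K] A ⊗[K] A} (h : u ∘ₗ v = LinearMap.id) (t) :
      leftT K A u (leftT K A v t) = t ∧ rightT K A u (rightT K A v t) = t := by
    simp [← LinearMap.comp_apply, ← leftT_comp, ← rightT_comp, h, leftT_id, rightT_id]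
  have hg' (t) := LinearMap.congr_fun hg t
  simp only [LinearMap.comp_apply] at hg'
  refine LinearMap.ext fun t => ?_
  simp only [LinearMap.comp_apply]
  calc rightT K A f (leftT K A f (rightT K A f t))
      = rightT K A f (leftT K A f (rightT K A f (leftT K A g (rightT K A (tauMap K A) (leftT K A g
          (leftT K A f (rightT K A (tauMap K A) (leftT K A f t)))))))) := by
        rw [(cancel hgf _).1, (cancel tauMap_comp_tauMap _).2, (cancel hgf _).1]
    _ = rightT K A f (leftT K A f (rightT K A f (rightT K A g (leftT K A g (rightT K A g
          (leftT K A f (rightT K A (tauMap K A) (leftT K A f t)))))))) := by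
        rw [hg']
    _ = leftT K A f (rightT K A (tauMap K A) (leftT K A f t)) := by
        rw [(cancel hfg _).2, (cancel hfg _).1, (cancel hfg _).2]

end Inverse

section Bialgebra

variable (K A : Type*) [CommSemiring K] [Semiring A] [Bialgebra K A]

noncomputable def thetaBialg : A ⊗[K] A →ₗ[K] A ⊗[K] A :=
  (TensorProduct.comm K A A).toLinearMap ∘ₗ
    TensorProduct.map LinearMap.id (LinearMap.mul' K A) ∘ₗ
    (TensorProduct.assoc K A A A).toLinearMap ∘ₗ
    TensorProduct.map (comul (R := K)) LinearMap.id

variable {K A}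

lemma thetaBialg_tmul (a b : A) :
    thetaBialg K A (a ⊗ₜ b) = TensorProduct.comm K A A (comul a) * (b ⊗ₜ 1) := by
  simp only [thetaBialg, LinearMap.comp_apply, map_tmul, LinearMap.id_apply, LinearEquiv.coe_coe]
  induction comul (R := K) a using TensorProduct.induction_on with
  | zero => simp
  | tmul x y => simp
  | add x y hx hy => simp [add_tmul, hx, hy, add_mul]

lemma thetaBialg_tmul_eq_sum {ι : Type*} {a : A} (r : Repr K a ι) (b : A) :
    thetaBialg K A (a ⊗ₜ b) = ∑ i ∈ r.index, (r.right i * b) ⊗ₜ r.left i := by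
  simp [thetaBialg_tmul, ← r.eq, map_sum, Finset.sum_mul]

lemma thetaBialg_mul_tmul (a b c : A) :
    thetaBialg K A ((a * b) ⊗ₜ c) =
      TensorProduct.comm K A A (comul a) * thetaBialg K A (b ⊗ₜ c) := by
  rw [thetaBialg_tmul, thetaBialg_tmul, Bialgebra.comul_mul, ← mul_assoc]
  congr 1
  exact map_mul (Algebra.TensorProduct.comm K A A) _ _

lemma rightT_thetaBialg_tmul (a b c : A) :
    rightT K A (thetaBialg K A) ((a ⊗ₜ b) ⊗ₜ c) =
      (TensorProduct.assoc K A A A).symm (a ⊗ₜ thetaBialg K A (b ⊗ₜ c)) := by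
  simp [rightT]

lemma rightT_leftT_thetaBialg_assoc_symm {ι κ : Type*} {a : A} (r : Repr K a ι)
    (r₁ : ∀ i, Repr K (r.left i) κ) (w : A ⊗[K] A) :
    rightT K A (thetaBialg K A) (leftT K A (thetaBialg K A)
        ((TensorProduct.assoc K A A A).symm (a ⊗ₜ w))) =
      ∑ i ∈ r.index, ∑ k ∈ (r₁ i).index,
        ((r.right i ⊗ₜ (r₁ i).right k) * w) ⊗ₜ (r₁ i).left k := by
  induction w using TensorProduct.induction_on with
  | zero => simp
  | tmul y z =>
    simp [leftT, rightT, thetaBialg_tmul_eq_sum r, thetaBialg_tmul_eq_sum (r₁ _), sum_tmul,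
      tmul_sum, map_sum]
  | add x y hx hy => simp [tmul_add, hx, hy, mul_add, add_tmul, Finset.sum_add_distrib]

lemma leftT_rightT_tauMap_leftT_thetaBialg_tmul {ι κ : Type*} {a : A} (r : Repr K a ι)
    (r₂ : ∀ i, Repr K (r.right i) κ) (b c : A) :
    leftT K A (thetaBialg K A) (rightT K A (tauMap K A) (leftT K A (thetaBialg K A)
        ((a ⊗ₜ b) ⊗ₜ c))) =
      ∑ i ∈ r.index, ∑ k ∈ (r₂ i).index,
        (((r₂ i).right k ⊗ₜ (r₂ i).left k) * thetaBialg K A (b ⊗ₜ c)) ⊗ₜ r.left i := by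
  simp [leftT, rightT, tauMap, thetaBialg_tmul_eq_sum r, sum_tmul, map_sum, thetaBialg_mul_tmul,
    ← (r₂ _).eq, Finset.sum_mul]

theorem isLEAS_thetaBialg : IsLEAS K A (thetaBialg K A) := by
  refine TensorProduct.ext_threefold fun a b c => ?_
  let r := ℛ K a
  let arrange : A ⊗[K] (A ⊗[K] A) →ₗ[K] (A ⊗[K] A) ⊗[K] A :=
    TensorProduct.map (LinearMap.mulRight K (thetaBialg K A (b ⊗ₜ c)) ∘ₗ
      (TensorProduct.comm K A A).toLinearMap) LinearMap.id ∘ₗ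
    (TensorProduct.comm K A (A ⊗[K] A)).toLinearMap
  have coassoc := congrArg arrange
    (sum_tmul_tmul_eq r (fun i => ℛ K (r.left i)) (fun i => ℛ K (r.right i)))
  simp only [arrange, map_sum, LinearMap.comp_apply, LinearEquiv.coe_coe, comm_tmul, map_tmul,
    LinearMap.mulRight_apply, LinearMap.id_apply] at coassoc
  simp only [LinearMap.comp_apply, rightT_thetaBialg_tmul,
    rightT_leftT_thetaBialg_assoc_symm r (fun i => ℛ K (r.left i)),
    leftT_rightT_tauMap_leftT_thetaBialg_tmul r (fun i => ℛ K (r.right i)), coassoc]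

end Bialgebra

lemma sum_tmul_algebraMap_counit {K A ι : Type*} [CommSemiring K] [Semiring A] [Algebra K A]
    [Coalgebra K A] {a : A} (r : Repr K a ι) :
    ∑ i ∈ r.index, r.left i ⊗ₜ algebraMap K A (counit (r.right i)) = a ⊗ₜ[K] (1 : A) := by
  have h := congrArg (LinearMap.lTensor A (Algebra.linearMap K A)) (sum_tmul_counit_eq r)
  simpa only [map_sum, LinearMap.lTensor_tmul, Algebra.linearMap_apply, map_one] using h

section Hopf

variable {K A : Type*} [CommSemiring K] [Semiring A] [HopfAlgebra K A]

lemma sum_tmul_mul_antipode {ι κ : Type*} {a : A} (r : Repr K a ι)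
    (r₁ : ∀ i, Repr K (r.left i) κ) :
    ∑ i ∈ r.index, ∑ k ∈ (r₁ i).index,
      (r₁ i).left k ⊗ₜ ((r₁ i).right k * HopfAlgebra.antipode K (r.right i)) =
        a ⊗ₜ[K] (1 : A) := by
  have coassoc := congrArg
    (LinearMap.lTensor A (LinearMap.mul' K A ∘ₗ LinearMap.lTensor A (HopfAlgebra.antipode K)))
    (sum_tmul_tmul_eq r r₁ (fun i => ℛ K (r.right i)))
  simp only [map_sum, LinearMap.lTensor_tmul, LinearMap.comp_apply,
    LinearMap.mul'_apply] at coassoc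
  simp only [coassoc, ← tmul_sum, HopfAlgebra.sum_mul_antipode_eq_algebraMap_counit,
    sum_tmul_algebraMap_counit]

lemma sum_tmul_antipode_mul {ι κ : Type*} {a : A} (r : Repr K a ι)
    (r₁ : ∀ i, Repr K (r.left i) κ) :
    ∑ i ∈ r.index, ∑ k ∈ (r₁ i).index,
      (r₁ i).left k ⊗ₜ (HopfAlgebra.antipode K ((r₁ i).right k) * r.right i) =
        a ⊗ₜ[K] (1 : A) := by
  have coassoc := congrArg
    (LinearMap.lTensor A (LinearMap.mul' K A ∘ₗ LinearMap.rTensor A (HopfAlgebra.antipode K)))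
    (sum_tmul_tmul_eq r r₁ (fun i => ℛ K (r.right i)))
  simp only [map_sum, LinearMap.lTensor_tmul, LinearMap.rTensor_tmul, LinearMap.comp_apply,
    LinearMap.mul'_apply] at coassoc
  simp only [coassoc, ← tmul_sum, HopfAlgebra.sum_antipode_mul_eq_algebraMap_counit,
    sum_tmul_algebraMap_counit]

end Hopf

section PhiHopf

variable {K A : Type*} [Field K] [Ring A] [HopfAlgebra K A]

lemma phiHopf_tmul_eq_sum {ι : Type*} (a : A) {b : A} (r : Repr K b ι) :
    PhiHopf K A (a ⊗ₜ b) =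
      ∑ i ∈ r.index, r.left i ⊗ₜ (HopfAlgebra.antipode K (r.right i) * a) := by
  simp [PhiHopf, tauMap, ← r.eq, sum_tmul, map_sum]

lemma thetaBialg_comp_phiHopf : thetaBialg K A ∘ₗ PhiHopf K A = LinearMap.id := by
  refine TensorProduct.ext' fun a b => ?_
  let r := ℛ K b
  have h := congrArg (TensorProduct.comm K A A · * a ⊗ₜ[K] (1 : A))
    (sum_tmul_mul_antipode r fun i => ℛ K (r.left i))
  simp only [map_sum, comm_tmul, Finset.sum_mul, Algebra.TensorProduct.tmul_mul_tmul, one_mul,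
    mul_one] at h
  simp [phiHopf_tmul_eq_sum a r, map_sum, thetaBialg_tmul_eq_sum (ℛ K (r.left _)), ← mul_assoc, h]

lemma phiHopf_comp_thetaBialg : PhiHopf K A ∘ₗ thetaBialg K A = LinearMap.id := by
  refine TensorProduct.ext' fun a b => ?_
  let r := ℛ K a
  have h := congrArg (· * (1 : A) ⊗ₜ[K] b) (sum_tmul_antipode_mul r fun i => ℛ K (r.left i))
  simp only [Finset.sum_mul, Algebra.TensorProduct.tmul_mul_tmul, one_mul, mul_one] at h
  simp [thetaBialg_tmul_eq_sum r, map_sum, phiHopf_tmul_eq_sum _ (ℛ K (r.left _)), ← mul_assoc, h]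

end PhiHopf

theorem stmt14 {K A : Type*} [Field K] [Ring A] [HopfAlgebra K A] :
    IsLEAS K A (PhiHopf K A) :=
  IsLEAS.of_inverse phiHopf_comp_thetaBialg thetaBialg_comp_phiHopf isLEAS_thetaBialg
end

section
/- Let (A,m,Δ,S) be a Hopf algebra and Φ(a⊗b) = Σ b⁽¹⁾ ⊗ S(b⁽²⁾)a. A linear form λ ∈ A* is a left counit of (A,Φ) (i.e. (λ⊗Id)∘Φ(a⊗b) = λ(b)a for all a,b) if and only if Σ λ(b⁽¹⁾)S(b⁽²⁾) = λ(b)·1_A for all b ∈ A. In particular every right integral λ on A (meaning (λ⊗μ)∘Δ = μ(1)λ for all μ ∈ A*) is a left counit of (A,Φ). -/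
/-! Unfolding `Φ`, `(λ ⊗ id) Φ (a ⊗ b) = (Σ λ(b⁽¹⁾) S(b⁽²⁾)) a`, so `λ` is a left counit exactly
when this element is `λ(b) · 1` (take `a = 1` for one direction). For a right integral, pairing
with every `μ ∈ A*` gives `Σ λ(b⁽¹⁾) b⁽²⁾ = λ(b) · 1`, because linear forms separate the points of
a vector space; applying `S`, which fixes `1`, gives the criterion. -/

open TensorProduct

theorem TensorProduct.lid_comp_map {K M N P : Type*} [CommSemiring K] [AddCommMonoid M]
    [AddCommMonoid N] [AddCommMonoid P] [Module K M] [Module K N] [Module K P]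
    (f : M →ₗ[K] K) (g : N →ₗ[K] P) :
    (TensorProduct.lid K P).toLinearMap ∘ₗ map f g =
      g ∘ₗ (TensorProduct.lid K N).toLinearMap ∘ₗ map f LinearMap.id :=
  ext' fun _ _ ↦ by simp

theorem LinearMap.mul'_self_eq_lid (K : Type*) [CommSemiring K] :
    LinearMap.mul' K K = (TensorProduct.lid K K).toLinearMap :=
  ext' fun _ _ ↦ rfl

theorem LinearMap.ext_of_forall_dual_comp {K M V : Type*} [Field K] [AddCommGroup M]
    [AddCommGroup V] [Module K M] [Module K V] {f g : M →ₗ[K] V}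
    (h : ∀ μ : Module.Dual K V, μ ∘ₗ f = μ ∘ₗ g) : f = g := by
  ext x
  rw [← sub_eq_zero, ← Module.forall_dual_apply_eq_zero_iff K]
  intro μ
  simpa [sub_eq_zero] using LinearMap.congr_fun (h μ) x

section HopfAlgebra

variable {K A : Type*} [Field K] [Ring A] [HopfAlgebra K A] (lam : A →ₗ[K] K)

theorem lid_map_id_phiHopf_tmul (a b : A) :
    ((TensorProduct.lid K A).toLinearMap ∘ₗ map lam LinearMap.id ∘ₗ PhiHopf K A) (a ⊗ₜ b) =
      ((TensorProduct.lid K A).toLinearMap ∘ₗ map lam (HopfAlgebra.antipode K) ∘ₗ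
        Coalgebra.comul) b * a := by
  suffices ∀ c : A ⊗[K] A, TensorProduct.lid K A (map lam LinearMap.id (map LinearMap.id
      (LinearMap.mul' K A ∘ₗ map (HopfAlgebra.antipode K) LinearMap.id)
      (TensorProduct.assoc K A A A (c ⊗ₜ a)))) =
      TensorProduct.lid K A (map lam (HopfAlgebra.antipode K) c) * a from this _
  intro c
  induction c using TensorProduct.induction_on with
  | zero => simp
  | tmul x y => simp
  | add x y hx hy => simp only [add_tmul, map_add, hx, hy, add_mul]

theorem lid_map_id_phiHopf_eq_iff :
    (TensorProduct.lid K A).toLinearMap ∘ₗ map lam LinearMap.id ∘ₗ PhiHopf K A =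
        (TensorProduct.lid K A).toLinearMap ∘ₗ map lam LinearMap.id ∘ₗ tauMap K A ↔
      (TensorProduct.lid K A).toLinearMap ∘ₗ map lam (HopfAlgebra.antipode K) ∘ₗ Coalgebra.comul =
        lam.smulRight (1 : A) := by
  have tau_tmul (a b : A) :
      ((TensorProduct.lid K A).toLinearMap ∘ₗ map lam LinearMap.id ∘ₗ tauMap K A) (a ⊗ₜ b) =
        lam b • a :=
    rfl
  constructor
  · intro h
    ext b
    simpa [lid_map_id_phiHopf_tmul, tau_tmul] using LinearMap.congr_fun h (1 ⊗ₜ b)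
  · intro h
    refine ext' fun a b ↦ ?_
    rw [lid_map_id_phiHopf_tmul, tau_tmul, h, LinearMap.smulRight_apply, smul_mul_assoc, one_mul]

theorem lid_map_antipode_comul_of_lid_map_id_comul
    (h : (TensorProduct.lid K A).toLinearMap ∘ₗ map lam LinearMap.id ∘ₗ Coalgebra.comul =
      lam.smulRight (1 : A)) :
    (TensorProduct.lid K A).toLinearMap ∘ₗ map lam (HopfAlgebra.antipode K) ∘ₗ Coalgebra.comul =
      lam.smulRight (1 : A) := by
  rw [← LinearMap.comp_assoc, lid_comp_map, LinearMap.comp_assoc, LinearMap.comp_assoc, h]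
  ext b
  simp

theorem lid_map_id_comul_eq_of_right_integral
    (h : ∀ μ : A →ₗ[K] K,
      LinearMap.mul' K K ∘ₗ map lam μ ∘ₗ Coalgebra.comul (R := K) = μ 1 • lam) :
    (TensorProduct.lid K A).toLinearMap ∘ₗ map lam LinearMap.id ∘ₗ Coalgebra.comul =
      lam.smulRight (1 : A) := by
  refine LinearMap.ext_of_forall_dual_comp fun μ ↦ ?_
  have hμ := h μ
  rw [LinearMap.mul'_self_eq_lid, ← LinearMap.comp_assoc, lid_comp_map] at hμ
  ext b
  simpa [mul_comm] using LinearMap.congr_fun hμ b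

end HopfAlgebra

theorem stmt16 {K A : Type*} [Field K] [Ring A] [HopfAlgebra K A] (lam : A →ₗ[K] K) :
    (((TensorProduct.lid K A).toLinearMap ∘ₗ TensorProduct.map lam LinearMap.id ∘ₗ
          PhiHopf K A =
        (TensorProduct.lid K A).toLinearMap ∘ₗ TensorProduct.map lam LinearMap.id ∘ₗ
          tauMap K A) ↔
      (TensorProduct.lid K A).toLinearMap ∘ₗ
          TensorProduct.map lam (HopfAlgebra.antipode (R := K)) ∘ₗ
          Coalgebra.comul (R := K) =
        lam.smulRight (1 : A)) ∧
    ((∀ μ : A →ₗ[K] K,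
        LinearMap.mul' K K ∘ₗ TensorProduct.map lam μ ∘ₗ Coalgebra.comul (R := K) =
          μ 1 • lam) →
      (TensorProduct.lid K A).toLinearMap ∘ₗ TensorProduct.map lam LinearMap.id ∘ₗ
          PhiHopf K A =
        (TensorProduct.lid K A).toLinearMap ∘ₗ TensorProduct.map lam LinearMap.id ∘ₗ
          tauMap K A) :=
  ⟨lid_map_id_phiHopf_eq_iff lam, fun hint ↦ (lid_map_id_phiHopf_eq_iff lam).mpr <|
    lid_map_antipode_comul_of_lid_map_id_comul lam <|
      lid_map_id_comul_eq_of_right_integral lam hint⟩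
end

section
/- Let (A,Φ) be an ℓEAS (Φ : A⊗A → A⊗A linear satisfying the braid equation (Id⊗Φ)∘(Φ⊗Id)∘(Id⊗Φ) = (Φ⊗Id)∘(Id⊗τ)∘(Φ⊗Id)), and let a ∈ A satisfy Φ(a⊗a) = a⊗a (a special vector of eigenvalue 1). Then the map Δ_a : A → A⊗A defined by Δ_a(b) = Φ(b⊗a) is coassociative: (Δ_a⊗Id)∘Δ_a = (Id⊗Δ_a)∘Δ_a. -/
open TensorProduct

theorem stmt17 {K A : Type*} [Field K] [AddCommGroup A] [Module K A]
    (Φ : A ⊗[K] A →ₗ[K] A ⊗[K] A) (hΦ : IsLEAS K A Φ)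
    (a : A) (ha : Φ (a ⊗ₜ[K] a) = a ⊗ₜ[K] a) :
    (TensorProduct.assoc K A A A).toLinearMap ∘ₗ
        TensorProduct.map (Φ ∘ₗ (TensorProduct.mk K A A).flip a) LinearMap.id ∘ₗ
        (Φ ∘ₗ (TensorProduct.mk K A A).flip a) =
      TensorProduct.map LinearMap.id (Φ ∘ₗ (TensorProduct.mk K A A).flip a) ∘ₗ
        (Φ ∘ₗ (TensorProduct.mk K A A).flip a) := by
  set Δ : A →ₗ[K] A ⊗[K] A := Φ ∘ₗ (TensorProduct.mk K A A).flip a with hΔ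
  have claimA : ∀ t : A ⊗[K] A,
      leftT K A Φ (rightT K A (tauMap K A) (t ⊗ₜ[K] a)) =
        TensorProduct.map Δ LinearMap.id t := by
    intro t
    induction t using TensorProduct.induction_on with
    | zero => simp
    | tmul x y => simp [leftT, rightT, tauMap, hΔ]
    | add u v hu hv =>
        simp only [add_tmul, map_add, hu, hv]
  have claimB : ∀ t : A ⊗[K] A,
      (TensorProduct.assoc K A A A) (rightT K A Φ (t ⊗ₜ[K] a)) =
        TensorProduct.map LinearMap.id Δ t := by
    intro t
    induction t using TensorProduct.induction_on with
    | zero => simp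
    | tmul x y => simp [rightT, hΔ]
    | add u v hu hv =>
        simp only [add_tmul, map_add, hu, hv]
  apply LinearMap.ext; intro b
  have h := DFunLike.congr_fun hΦ ((b ⊗ₜ[K] a) ⊗ₜ[K] a)
  simp only [LinearMap.comp_apply] at h
  have h0 : rightT K A Φ ((b ⊗ₜ[K] a) ⊗ₜ[K] a) = (b ⊗ₜ[K] a) ⊗ₜ[K] a := by
    simp [rightT, ha]
  have h1 : leftT K A Φ ((b ⊗ₜ[K] a) ⊗ₜ[K] a) = (Φ (b ⊗ₜ[K] a)) ⊗ₜ[K] a := by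
    simp [leftT]
  rw [h0, h1] at h
  have hb : Δ b = Φ (b ⊗ₜ[K] a) := by simp [hΔ]
  simp only [LinearMap.comp_apply, LinearEquiv.coe_coe, hb]
  rw [← claimA (Φ (b ⊗ₜ[K] a)), ← claimB (Φ (b ⊗ₜ[K] a)), ← h]
end

section
/- Let (A,Φ) be an ℓEAS and ε ∈ A* satisfy (ε⊗ε)∘Φ = ε⊗ε. Then the map m_ε : A⊗A → A defined by m_ε = (Id⊗ε)∘Φ is associative: m_ε∘(m_ε⊗Id) = m_ε∘(Id⊗m_ε). -/
open TensorProduct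

section Aux
variable {K A : Type*} [Field K] [AddCommGroup A] [Module K A]

noncomputable def rMap (ε : A →ₗ[K] K) : A ⊗[K] A →ₗ[K] A :=
  (TensorProduct.rid K A).toLinearMap ∘ₗ TensorProduct.map LinearMap.id ε

noncomputable def eeMap (ε : A →ₗ[K] K) : A ⊗[K] A →ₗ[K] K :=
  (TensorProduct.lid K K).toLinearMap ∘ₗ TensorProduct.map ε ε

noncomputable def EMap (ε : A →ₗ[K] K) : (A ⊗[K] A) ⊗[K] A →ₗ[K] A :=
  (TensorProduct.rid K A).toLinearMap ∘ₗ TensorProduct.map (rMap ε) ε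

lemma EMap_alt (ε : A →ₗ[K] K) :
    EMap ε = ((TensorProduct.rid K A).toLinearMap ∘ₗ
      TensorProduct.map LinearMap.id (eeMap ε)) ∘ₗ (TensorProduct.assoc K A A A).toLinearMap := by
  ext x y z
  simp [EMap, rMap, eeMap, smul_smul, mul_comm]

lemma lemB' (ε : A →ₗ[K] K) (g : A ⊗[K] A →ₗ[K] A) :
    (TensorProduct.rid K A).toLinearMap ∘ₗ TensorProduct.map g ε =
      (g ∘ₗ TensorProduct.map LinearMap.id (rMap ε)) ∘ₗ
        (TensorProduct.assoc K A A A).toLinearMap := by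
  ext x y z
  simp [rMap]

lemma lemD (ε : A →ₗ[K] K) (g : A ⊗[K] A →ₗ[K] A) :
    ((TensorProduct.rid K A).toLinearMap ∘ₗ TensorProduct.map g ε) ∘ₗ rightT K A (tauMap K A) =
      g ∘ₗ TensorProduct.map (rMap ε) LinearMap.id := by
  ext x y z
  simp [rMap, rightT, tauMap, TensorProduct.smul_tmul]

lemma cancelC {M N P : Type*} [AddCommGroup M] [AddCommGroup N] [AddCommGroup P]
    [Module K M] [Module K N] [Module K P] (e : M ≃ₗ[K] N) (f : P →ₗ[K] N) :
    e.toLinearMap ∘ₗ (e.symm.toLinearMap ∘ₗ f) = f := by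
  ext p; simp

lemma rightT_comp_s18 (f : A ⊗[K] A →ₗ[K] A ⊗[K] A) {B : Type*} [AddCommGroup B] [Module K B]
    (T : A ⊗[K] (A ⊗[K] A) →ₗ[K] B) :
    (T ∘ₗ (TensorProduct.assoc K A A A).toLinearMap) ∘ₗ rightT K A f =
      (T ∘ₗ TensorProduct.map LinearMap.id f) ∘ₗ (TensorProduct.assoc K A A A).toLinearMap := by
  unfold rightT
  simp only [LinearMap.comp_assoc]
  rw [cancelC]

end Aux

theorem stmt18 {K A : Type*} [Field K] [AddCommGroup A] [Module K A]
    (Φ : A ⊗[K] A →ₗ[K] A ⊗[K] A) (hΦ : IsLEAS K A Φ)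
    (ε : A →ₗ[K] K)
    (hε : TensorProduct.map ε ε ∘ₗ Φ = TensorProduct.map ε ε) :
    ((TensorProduct.rid K A).toLinearMap ∘ₗ TensorProduct.map LinearMap.id ε ∘ₗ Φ) ∘ₗ
        TensorProduct.map
          ((TensorProduct.rid K A).toLinearMap ∘ₗ TensorProduct.map LinearMap.id ε ∘ₗ Φ)
          LinearMap.id =
      ((TensorProduct.rid K A).toLinearMap ∘ₗ TensorProduct.map LinearMap.id ε ∘ₗ Φ) ∘ₗ
        TensorProduct.map LinearMap.id
          ((TensorProduct.rid K A).toLinearMap ∘ₗ TensorProduct.map LinearMap.id ε ∘ₗ Φ) ∘ₗ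
        (TensorProduct.assoc K A A A).toLinearMap := by
  set R := (TensorProduct.rid K A).toLinearMap with hR
  set As := (TensorProduct.assoc K A A A).toLinearMap with hAs
  set m := rMap ε ∘ₗ Φ with hm
  have hee : eeMap ε ∘ₗ Φ = eeMap ε := by
    unfold eeMap
    rw [LinearMap.comp_assoc, hε]
  have hfuse : ∀ {B : Type _} [AddCommGroup B] [Module K B] (X : B →ₗ[K] A ⊗[K] (A ⊗[K] A)),
      TensorProduct.map (LinearMap.id : A →ₗ[K] A) (eeMap ε) ∘ₗ
        (TensorProduct.map LinearMap.id Φ ∘ₗ X) =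
      TensorProduct.map LinearMap.id (eeMap ε) ∘ₗ X := by
    intro B _ _ X
    rw [← LinearMap.comp_assoc, ← TensorProduct.map_comp, hee, LinearMap.id_comp]
  have hfuse2 : ∀ {B : Type _} [AddCommGroup B] [Module K B] (X : B →ₗ[K] A ⊗[K] (A ⊗[K] A)),
      TensorProduct.map (LinearMap.id : A →ₗ[K] A) (rMap ε) ∘ₗ
        (TensorProduct.map LinearMap.id Φ ∘ₗ X) =
      TensorProduct.map LinearMap.id m ∘ₗ X := by
    intro B _ _ X
    rw [← LinearMap.comp_assoc, ← TensorProduct.map_comp, LinearMap.id_comp, ← hm]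
  -- E ∘ rightT Φ = E
  have h1 : EMap ε ∘ₗ rightT K A Φ = EMap ε := by
    rw [EMap_alt, rightT_comp_s18, LinearMap.comp_assoc, LinearMap.comp_assoc, hfuse, ← LinearMap.comp_assoc]
  -- E ∘ leftT f = R ∘ map (r ∘ f) ε
  have h2 : ∀ f : A ⊗[K] A →ₗ[K] A ⊗[K] A,
      EMap ε ∘ₗ leftT K A f = R ∘ₗ TensorProduct.map (rMap ε ∘ₗ f) ε := by
    intro f
    unfold EMap leftT
    rw [LinearMap.comp_assoc, ← TensorProduct.map_comp, LinearMap.comp_id]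
  -- (R ∘ map m ε) ∘ rightT Φ = m ∘ map id m ∘ As
  have h3 : (R ∘ₗ TensorProduct.map m ε) ∘ₗ rightT K A Φ =
      m ∘ₗ TensorProduct.map LinearMap.id m ∘ₗ As := by
    rw [lemB' ε m, rightT_comp_s18, LinearMap.comp_assoc, LinearMap.comp_assoc, hfuse2]
  -- (R ∘ map m ε) ∘ rightT τ ∘ leftT Φ = m ∘ map m id
  have h4 : ((R ∘ₗ TensorProduct.map m ε) ∘ₗ rightT K A (tauMap K A)) ∘ₗ leftT K A Φ =
      m ∘ₗ TensorProduct.map m LinearMap.id := by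
    rw [lemD ε m]
    unfold leftT
    rw [LinearMap.comp_assoc, ← TensorProduct.map_comp, LinearMap.id_comp, ← hm]
  have lhs_eq : EMap ε ∘ₗ (rightT K A Φ ∘ₗ leftT K A Φ ∘ₗ rightT K A Φ) =
      m ∘ₗ TensorProduct.map LinearMap.id m ∘ₗ As := by
    rw [← LinearMap.comp_assoc, h1, ← LinearMap.comp_assoc, h2 Φ, ← hm, h3]
  have rhs_eq : EMap ε ∘ₗ (leftT K A Φ ∘ₗ rightT K A (tauMap K A) ∘ₗ leftT K A Φ) =
      m ∘ₗ TensorProduct.map m LinearMap.id := by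
    rw [← LinearMap.comp_assoc, h2 Φ, ← hm, ← LinearMap.comp_assoc, h4]
  have key := congrArg (fun f => EMap ε ∘ₗ f) hΦ
  rw [lhs_eq, rhs_eq] at key
  show m ∘ₗ TensorProduct.map m LinearMap.id =
    m ∘ₗ TensorProduct.map LinearMap.id m ∘ₗ As
  exact key.symm
end
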